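/- Suppose f and h both satisfy (G1) and (G3), fix H with ‖H‖_{2,col} ≤ B, and let Θ = (θ_{l,j}, w_{l,j}) be parameters with √(‖θ_{l,j}‖²+‖w_{l,j}‖²) ≤ r for all l, j. Let T̂_Θ be the two-half-step discrete Transformer and let T̄_Θ be the merged one-step scheme: T̄(0) = H, T̄(t_{l+1}) = T̄(t_l) + (Δt/(2M))∑_{j=1}^{M}(f(T̄(t_l),θ_{l,j}) + h(T̄(t_l),w_{l,j})), with Δt = 1/L. Then there is a constant C, depending only on N, D, r, B and the constants in (G1), (G3), such that ‖T̂_Θ(H,t_l) − T̄_Θ(H,t_l)‖_{2,col} ≤ C/L for every grid point t_l ∈ {0, 1/L, …, 1}. -/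

import Mathlib

open MeasureTheory Set

noncomputable section

/-- `D × (N+1)` real matrices, with the Frobenius (Euclidean) norm. -/
abbrev Mat (D N : ℕ) : Type := EuclideanSpace ℝ (Fin D × Fin (N + 1))

/-- Parameter space `ℝ^p` with the Euclidean norm. -/
abbrev Par (p : ℕ) : Type := EuclideanSpace ℝ (Fin p)

/-- The `j`-th column of a matrix, as a Euclidean vector. -/
noncomputable def matCol {D N : ℕ} (Z : Mat D N) (j : Fin (N + 1)) :
    EuclideanSpace ℝ (Fin D) :=
  (WithLp.equiv 2 (Fin D → ℝ)).symm fun i => Z (i, j)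

/-- Maximum ℓ²-norm of a column: `‖Z‖_{2,col}`. -/
noncomputable def colNorm {D N : ℕ} (Z : Mat D N) : ℝ :=
  ⨆ j : Fin (N + 1), ‖matCol Z j‖

/-- The discrete Transformer: `T̂(t_{l+1})` is obtained from `T̂(t_l)` by one self-attention
half-step with encoder `f` followed by one feed-forward half-step with encoder `h`,
with step size `Δt/2 = 1/(2L)` and `M` heads. -/
noncomputable def Tdis {D N q : ℕ} (f h : Mat D N → Par q → Mat D N) (L M : ℕ)
    (θ w : ℕ → Fin M → Par q) (H : Mat D N) : ℕ → Mat D N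
  | 0 => H
  | l + 1 =>
    let T := Tdis f h L M θ w H l
    let T' := T + (2 * (L : ℝ) * (M : ℝ))⁻¹ • ∑ j : Fin M, f T (θ l j)
    T' + (2 * (L : ℝ) * (M : ℝ))⁻¹ • ∑ j : Fin M, h T' (w l j)

/-- The discrete Transformer at the half grid point `t_l + Δt/2`. -/
noncomputable def TdisHalf {D N q : ℕ} (f h : Mat D N → Par q → Mat D N) (L M : ℕ)
    (θ w : ℕ → Fin M → Par q) (H : Mat D N) (l : ℕ) : Mat D N :=
  Tdis f h L M θ w H l +
    (2 * (L : ℝ) * (M : ℝ))⁻¹ • ∑ j : Fin M, f (Tdis f h L M θ w H l) (θ l j)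

/-- The merged one-step scheme, averaging the two encoders in a single residual step. -/
noncomputable def Tbar {D N q : ℕ} (f h : Mat D N → Par q → Mat D N) (L M : ℕ)
    (θ w : ℕ → Fin M → Par q) (H : Mat D N) : ℕ → Mat D N
  | 0 => H
  | l + 1 =>
    Tbar f h L M θ w H l +
      (2 * (L : ℝ) * (M : ℝ))⁻¹ •
        ∑ j : Fin M, (f (Tbar f h L M θ w H l) (θ l j) + h (Tbar f h L M θ w H l) (w l j))

/-!
Both schemes are built from explicit Euler steps of size `Δt/2 = 1/(2L)` for the averaged head
maps `F_l = M⁻¹ ∑ f(·, θ_{l,j})` and `G_l = M⁻¹ ∑ h(·, w_{l,j})`. Since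
`‖·‖_{2,col} ≤ ‖·‖_F ≤ √(N+1) ‖·‖_{2,col}`, (G1) makes `F_l, G_l` linearly bounded in Frobenius
norm with some constant `k`, so every iterate (and every half-step point) stays in the ball of
radius `e^k √(N+1) B`; there (G3) and the mean value inequality make `F_l, G_l` Lipschitz. One
step of the split scheme differs from the merged one only in evaluating `G_l` at
`T + (Δt/2) F_l(T)` instead of `T`, an `O(Δt²)` discrepancy, and the discrete Grönwall
inequality adds up `L` of them to `O(1/L)`.
-/

open Real Metric

theorem discrete_gronwall_of_lt {u : ℕ → ℝ} {a b : ℝ} {n : ℕ} (ha : 0 ≤ a) (hb : 0 ≤ b)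
    (hu : ∀ l < n, u (l + 1) ≤ exp a * u l + b) :
    ∀ l ≤ n, u l ≤ (u 0 + l * b) * exp (a * l) := by
  intro l
  induction l with
  | zero => simp
  | succ l ih =>
    intro hl
    calc u (l + 1) ≤ exp a * u l + b := hu l hl
      _ ≤ exp a * ((u 0 + l * b) * exp (a * l)) + b * exp (a * (l + 1)) := by
        gcongr
        · exact ih (Nat.le_of_succ_le hl)
        · exact le_mul_of_one_le_right hb (one_le_exp (by positivity))
      _ = (u 0 + ↑(l + 1) * b) * exp (a * ↑(l + 1)) := by
        push_cast
        rw [show a * (l + 1) = a + a * l by ring, exp_add]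
        ring

theorem mem_closedBall_of_norm_le_mul_exp {E : Type*} [SeminormedAddCommGroup E] {τ k ρ₀ s : ℝ}
    {n : ℕ} {x₀ z : E} (hτ : 0 ≤ τ) (hk : 0 ≤ k) (hτn : 2 * τ * n = 1) (hx₀ : ‖x₀‖ ≤ ρ₀)
    (hs : s ≤ n) (hz : ‖z‖ ≤ ‖x₀‖ * exp (2 * τ * k * s)) : z ∈ closedBall 0 (exp k * ρ₀) := by
  refine mem_closedBall_zero_iff.2 (hz.trans ?_)
  rw [mul_comm]
  refine mul_le_mul (exp_le_exp.2 ?_) hx₀ (norm_nonneg _) (exp_pos _).le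
  calc 2 * τ * k * s ≤ 2 * τ * k * n := by gcongr
    _ = k := by rw [mul_right_comm, hτn, one_mul]

section Splitting

variable {E : Type*} [NormedAddCommGroup E] [NormedSpace ℝ E]

def halfStep (τ : ℝ) (F : E → E) (x : E) : E :=
  x + τ • F x

def splitScheme (τ : ℝ) (F G : ℕ → E → E) (x₀ : E) : ℕ → E
  | 0 => x₀
  | l + 1 => halfStep τ (G l) (halfStep τ (F l) (splitScheme τ F G x₀ l))

def mergedScheme (τ : ℝ) (F G : ℕ → E → E) (x₀ : E) : ℕ → E
  | 0 => x₀
  | l + 1 => halfStep τ (F l + G l) (mergedScheme τ F G x₀ l)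

@[simp]
theorem splitScheme_zero (τ : ℝ) (F G : ℕ → E → E) (x₀ : E) : splitScheme τ F G x₀ 0 = x₀ := rfl

@[simp]
theorem mergedScheme_zero (τ : ℝ) (F G : ℕ → E → E) (x₀ : E) : mergedScheme τ F G x₀ 0 = x₀ :=
  rfl

theorem norm_halfStep_le {τ k : ℝ} {F : E → E} {x : E} (hτ : 0 ≤ τ) (hF : ‖F x‖ ≤ k * ‖x‖) :
    ‖halfStep τ F x‖ ≤ exp (τ * k) * ‖x‖ :=
  calc ‖x + τ • F x‖ ≤ ‖x‖ + τ * (k * ‖x‖) := by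
        refine norm_add_le_of_le le_rfl ?_
        rw [norm_smul, Real.norm_of_nonneg hτ]
        gcongr
    _ = (τ * k + 1) * ‖x‖ := by ring
    _ ≤ exp (τ * k) * ‖x‖ := by gcongr; exact add_one_le_exp _

theorem norm_halfStep_sub_le {τ k : ℝ} {F : E → E} {x y : E} (hτ : 0 ≤ τ)
    (hF : ‖F x‖ ≤ k * ‖x‖) : ‖halfStep τ F x - y‖ ≤ ‖x - y‖ + τ * (k * ‖x‖) := by
  rw [halfStep, add_sub_right_comm]
  refine norm_add_le_of_le le_rfl ?_
  rw [norm_smul, Real.norm_of_nonneg hτ]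
  gcongr

theorem norm_halfStep_halfStep_sub_halfStep_add_le {τ k Λ : ℝ} {F G : E → E} {x y : E}
    (hτ : 0 ≤ τ) (hΛ : 0 ≤ Λ) (hF : ‖F x‖ ≤ k * ‖x‖) (hF_lip : ‖F x - F y‖ ≤ Λ * ‖x - y‖)
    (hG_lip : ‖G (halfStep τ F x) - G y‖ ≤ Λ * ‖halfStep τ F x - y‖) :
    ‖halfStep τ G (halfStep τ F x) - halfStep τ (F + G) y‖ ≤
      (1 + 2 * τ * Λ) * ‖x - y‖ + τ ^ 2 * Λ * k * ‖x‖ := by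
  have hsplit : halfStep τ G (halfStep τ F x) - halfStep τ (F + G) y =
      (x - y) + τ • (F x - F y) + τ • (G (halfStep τ F x) - G y) := by
    simp only [halfStep, Pi.add_apply, smul_sub, smul_add]
    abel
  rw [hsplit]
  calc _ ≤ ‖x - y‖ + τ * (Λ * ‖x - y‖) + τ * (Λ * (‖x - y‖ + τ * (k * ‖x‖))) := by
        refine norm_add₃_le.trans (add_le_add_three le_rfl ?_ ?_) <;>
          rw [norm_smul, Real.norm_of_nonneg hτ] <;> gcongr
        exact hG_lip.trans (by gcongr; exact norm_halfStep_sub_le hτ hF)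
    _ = (1 + 2 * τ * Λ) * ‖x - y‖ + τ ^ 2 * Λ * k * ‖x‖ := by ring

section Growth

variable {τ k : ℝ} {n : ℕ} {F G : ℕ → E → E} {x₀ : E}

theorem norm_splitScheme_le (hτ : 0 ≤ τ) (hk : 0 ≤ k) (hF : ∀ l < n, ∀ x, ‖F l x‖ ≤ k * ‖x‖)
    (hG : ∀ l < n, ∀ x, ‖G l x‖ ≤ k * ‖x‖) :
    ∀ l ≤ n, ‖splitScheme τ F G x₀ l‖ ≤ ‖x₀‖ * exp (2 * τ * k * l) := by
  have hstep : ∀ l < n, ‖splitScheme τ F G x₀ (l + 1)‖ ≤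
      exp (2 * τ * k) * ‖splitScheme τ F G x₀ l‖ + 0 := fun l hl =>
    calc _ ≤ exp (τ * k) * (exp (τ * k) * ‖splitScheme τ F G x₀ l‖) :=
          (norm_halfStep_le hτ (hG l hl _)).trans (by gcongr; exact norm_halfStep_le hτ (hF l hl _))
      _ = _ := by rw [← mul_assoc, ← exp_add]; ring_nf
  intro l hl
  simpa using discrete_gronwall_of_lt (u := fun l => ‖splitScheme τ F G x₀ l‖)
    (by positivity) le_rfl hstep l hl

theorem norm_mergedScheme_le (hτ : 0 ≤ τ) (hk : 0 ≤ k) (hF : ∀ l < n, ∀ x, ‖F l x‖ ≤ k * ‖x‖)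
    (hG : ∀ l < n, ∀ x, ‖G l x‖ ≤ k * ‖x‖) :
    ∀ l ≤ n, ‖mergedScheme τ F G x₀ l‖ ≤ ‖x₀‖ * exp (2 * τ * k * l) := by
  have hFG : ∀ l < n, ∀ x, ‖(F l + G l) x‖ ≤ 2 * k * ‖x‖ := fun l hl x =>
    (norm_add_le _ _).trans (by linarith [hF l hl x, hG l hl x])
  have hstep : ∀ l < n, ‖mergedScheme τ F G x₀ (l + 1)‖ ≤
      exp (2 * τ * k) * ‖mergedScheme τ F G x₀ l‖ + 0 := fun l hl => by
    rw [add_zero, show 2 * τ * k = τ * (2 * k) by ring]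
    exact norm_halfStep_le hτ (hFG l hl _)
  intro l hl
  simpa using discrete_gronwall_of_lt (u := fun l => ‖mergedScheme τ F G x₀ l‖)
    (by positivity) le_rfl hstep l hl

end Growth

theorem norm_splitScheme_sub_mergedScheme_le {n : ℕ} (hn : 0 < n) {k Λ ρ₀ : ℝ}
    {F G : ℕ → E → E} {x₀ : E} (hk : 0 ≤ k) (hΛ : 0 ≤ Λ) (hx₀ : ‖x₀‖ ≤ ρ₀)
    (hF : ∀ l < n, ∀ x, ‖F l x‖ ≤ k * ‖x‖) (hG : ∀ l < n, ∀ x, ‖G l x‖ ≤ k * ‖x‖)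
    (hF_lip : ∀ l < n, ∀ x ∈ closedBall (0 : E) (exp k * ρ₀), ∀ y ∈ closedBall (0 : E) (exp k * ρ₀),
      ‖F l x - F l y‖ ≤ Λ * ‖x - y‖)
    (hG_lip : ∀ l < n, ∀ x ∈ closedBall (0 : E) (exp k * ρ₀), ∀ y ∈ closedBall (0 : E) (exp k * ρ₀),
      ‖G l x - G l y‖ ≤ Λ * ‖x - y‖) :
    ∀ l ≤ n, ‖splitScheme (2 * n)⁻¹ F G x₀ l - mergedScheme (2 * n)⁻¹ F G x₀ l‖ ≤
      exp Λ * Λ * k * (exp k * ρ₀) / (4 * n) := by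
  set τ : ℝ := (2 * n)⁻¹
  set ρ := exp k * ρ₀
  have hτ : 0 ≤ τ := by positivity
  have hτn : 2 * τ * n = 1 := by simp only [τ]; field_simp
  have hρ : 0 ≤ ρ := by have := (norm_nonneg x₀).trans hx₀; positivity
  have hball {z : E} {s : ℝ} (hs : s ≤ n) (hz : ‖z‖ ≤ ‖x₀‖ * exp (2 * τ * k * s)) :
      z ∈ closedBall 0 ρ :=
    mem_closedBall_of_norm_le_mul_exp hτ hk hτn hx₀ hs hz
  have hsplit := norm_splitScheme_le (x₀ := x₀) hτ hk hF hG
  have hsplit_mem : ∀ l ≤ n, splitScheme τ F G x₀ l ∈ closedBall 0 ρ := fun l hl =>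
    hball (by exact_mod_cast hl) (hsplit l hl)
  have hmerged_mem : ∀ l ≤ n, mergedScheme τ F G x₀ l ∈ closedBall 0 ρ := fun l hl =>
    hball (by exact_mod_cast hl) (norm_mergedScheme_le hτ hk hF hG l hl)
  have hmid_mem : ∀ l < n, halfStep τ (F l) (splitScheme τ F G x₀ l) ∈ closedBall 0 ρ :=
    fun l hl => by
      refine hball (s := l + 1 / 2) (by linarith [show (l : ℝ) + 1 ≤ n by exact_mod_cast hl]) ?_
      calc _ ≤ exp (τ * k) * (‖x₀‖ * exp (2 * τ * k * l)) :=
            (norm_halfStep_le hτ (hF l hl _)).trans (by gcongr; exact hsplit l hl.le)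
        _ = ‖x₀‖ * exp (2 * τ * k * (l + 1 / 2)) := by rw [mul_left_comm, ← exp_add]; ring_nf
  have hstep : ∀ l < n, ‖splitScheme τ F G x₀ (l + 1) - mergedScheme τ F G x₀ (l + 1)‖ ≤
      exp (2 * τ * Λ) * ‖splitScheme τ F G x₀ l - mergedScheme τ F G x₀ l‖ +
        τ ^ 2 * Λ * k * ρ := fun l hl =>
    calc _ ≤ (1 + 2 * τ * Λ) * ‖splitScheme τ F G x₀ l - mergedScheme τ F G x₀ l‖ +
          τ ^ 2 * Λ * k * ‖splitScheme τ F G x₀ l‖ :=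
        norm_halfStep_halfStep_sub_halfStep_add_le hτ hΛ (hF l hl _)
          (hF_lip l hl _ (hsplit_mem l hl.le) _ (hmerged_mem l hl.le))
          (hG_lip l hl _ (hmid_mem l hl) _ (hmerged_mem l hl.le))
      _ ≤ _ := by
        gcongr
        · linarith [add_one_le_exp (2 * τ * Λ)]
        · exact mem_closedBall_zero_iff.1 (hsplit_mem l hl.le)
  intro l hl
  calc _ ≤ (0 + l * (τ ^ 2 * Λ * k * ρ)) * exp (2 * τ * Λ * l) := by
        simpa using discrete_gronwall_of_lt
          (u := fun l => ‖splitScheme τ F G x₀ l - mergedScheme τ F G x₀ l‖)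
          (by positivity) (by positivity) hstep l hl
    _ ≤ (0 + n * (τ ^ 2 * Λ * k * ρ)) * exp (2 * τ * Λ * n) := by gcongr
    _ = exp Λ * Λ * k * ρ / (4 * n) := by
        rw [show 2 * τ * Λ * n = Λ by rw [mul_right_comm, hτn, one_mul]]
        simp only [τ]
        field_simp
        ring

end Splitting

section ColumnNorm

variable {D N : ℕ}

theorem norm_matCol_le_colNorm (Z : Mat D N) (j : Fin (N + 1)) : ‖matCol Z j‖ ≤ colNorm Z :=
  le_ciSup (f := fun j => ‖matCol Z j‖) (Set.finite_range _).bddAbove j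

theorem colNorm_nonneg (Z : Mat D N) : 0 ≤ colNorm Z :=
  (norm_nonneg _).trans (norm_matCol_le_colNorm Z 0)

theorem norm_sq_eq_sum_norm_matCol_sq (Z : Mat D N) : ‖Z‖ ^ 2 = ∑ j, ‖matCol Z j‖ ^ 2 := by
  simp only [EuclideanSpace.norm_sq_eq, Fintype.sum_prod_type]
  exact Finset.sum_comm

theorem colNorm_le_norm (Z : Mat D N) : colNorm Z ≤ ‖Z‖ :=
  ciSup_le fun j => le_of_sq_le_sq (by
    rw [norm_sq_eq_sum_norm_matCol_sq]
    exact Finset.single_le_sum (f := fun j => ‖matCol Z j‖ ^ 2) (fun _ _ => by positivity)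
      (Finset.mem_univ j)) (norm_nonneg Z)

theorem norm_le_sqrt_mul_colNorm (Z : Mat D N) : ‖Z‖ ≤ √(N + 1) * colNorm Z := by
  rw [← sqrt_sq (colNorm_nonneg Z), ← sqrt_mul (by positivity)]
  refine le_sqrt_of_sq_le ?_
  calc ‖Z‖ ^ 2 = ∑ j, ‖matCol Z j‖ ^ 2 := norm_sq_eq_sum_norm_matCol_sq Z
    _ ≤ ∑ _j : Fin (N + 1), colNorm Z ^ 2 := by
      gcongr with j; exact norm_matCol_le_colNorm Z j
    _ = (N + 1) * colNorm Z ^ 2 := by simp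

end ColumnNorm

section HeadMean

variable {X P : Type*} [NormedAddCommGroup X] [NormedSpace ℝ X] {M : ℕ}

def headMean (g : X → P → X) (θ : Fin M → P) (x : X) : X :=
  (M : ℝ)⁻¹ • ∑ j, g x (θ j)

theorem norm_inv_smul_sum_le (hM : 0 < M) {v : Fin M → X} {c : ℝ} (hv : ∀ j, ‖v j‖ ≤ c) :
    ‖(M : ℝ)⁻¹ • ∑ j, v j‖ ≤ c := by
  rw [norm_smul, norm_inv, Real.norm_natCast, inv_mul_le_iff₀ (by positivity)]
  calc ‖∑ j, v j‖ ≤ ∑ _j : Fin M, c := norm_sum_le_of_le _ fun j _ => hv j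
    _ = M * c := by simp

theorem headMean_sub_headMean (g : X → P → X) (θ : Fin M → P) (x y : X) :
    headMean g θ x - headMean g θ y = (M : ℝ)⁻¹ • ∑ j, (g x (θ j) - g y (θ j)) := by
  rw [headMean, headMean, ← smul_sub, Finset.sum_sub_distrib]

theorem nonneg_of_norm_fderiv_le [NormedAddCommGroup P] {g : X → P → X} {φ : ℝ → ℝ}
    (hφ : Monotone φ)
    (hg : ∀ x θ, ‖fderiv ℝ (fun x' => g x' θ) x‖ ≤ φ ‖x‖ * (1 + ‖θ‖ + ‖θ‖ ^ 2))
    {ρ : ℝ} (hρ : 0 ≤ ρ) : 0 ≤ φ ρ := by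
  have h0 : 0 ≤ φ 0 := by simpa using (norm_nonneg _).trans (hg 0 0)
  exact h0.trans (hφ hρ)

theorem norm_headMean_sub_le [NormedAddCommGroup P] {g : X → P → X} {φ : ℝ → ℝ} {r ρ : ℝ}
    (hφ : Monotone φ) (hdiff : ∀ θ, Differentiable ℝ fun x => g x θ)
    (hg : ∀ x θ, ‖fderiv ℝ (fun x' => g x' θ) x‖ ≤ φ ‖x‖ * (1 + ‖θ‖ + ‖θ‖ ^ 2))
    (hM : 0 < M) {θ : Fin M → P} (hθ : ∀ j, ‖θ j‖ ≤ r) {x y : X}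
    (hx : x ∈ closedBall 0 ρ) (hy : y ∈ closedBall 0 ρ) :
    ‖headMean g θ x - headMean g θ y‖ ≤ φ ρ * (1 + r + r ^ 2) * ‖x - y‖ := by
  have hφρ : 0 ≤ φ ρ :=
    nonneg_of_norm_fderiv_le hφ hg (nonneg_of_mem_closedBall hx)
  rw [headMean_sub_headMean]
  refine norm_inv_smul_sum_le hM fun j => ?_
  refine (convex_closedBall 0 ρ).norm_image_sub_le_of_norm_fderiv_le
    (fun z _ => (hdiff (θ j)).differentiableAt) (fun z hz => ?_) hy hx
  calc _ ≤ φ ‖z‖ * (1 + ‖θ j‖ + ‖θ j‖ ^ 2) := hg z (θ j)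
    _ ≤ φ ρ * (1 + r + r ^ 2) := by
      gcongr
      · exact hφ (mem_closedBall_zero_iff.1 hz)
      · exact hθ j
      · exact hθ j

end HeadMean

theorem norm_headMean_le_of_colNorm_le {D N q M : ℕ} {g : Mat D N → Par q → Mat D N} {K r : ℝ}
    (hK : 0 ≤ K) (hg : ∀ T θ, colNorm (g T θ) ≤ K * colNorm T * (1 + ‖θ‖ + ‖θ‖ ^ 2))
    (hM : 0 < M) {θ : Fin M → Par q} (hθ : ∀ j, ‖θ j‖ ≤ r) (x : Mat D N) :
    ‖headMean g θ x‖ ≤ √(N + 1) * K * (1 + r + r ^ 2) * ‖x‖ :=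
  norm_inv_smul_sum_le hM fun j =>
    calc ‖g x (θ j)‖ ≤ √(N + 1) * colNorm (g x (θ j)) := norm_le_sqrt_mul_colNorm _
      _ ≤ √(N + 1) * (K * colNorm x * (1 + ‖θ j‖ + ‖θ j‖ ^ 2)) := by gcongr; exact hg x (θ j)
      _ ≤ √(N + 1) * (K * ‖x‖ * (1 + r + r ^ 2)) := by
        gcongr
        · exact colNorm_le_norm x
        · exact hθ j
        · exact hθ j
      _ = √(N + 1) * K * (1 + r + r ^ 2) * ‖x‖ := by ring

section Transformer

variable {D N q : ℕ} (f h : Mat D N → Par q → Mat D N) (L M : ℕ) (θ w : ℕ → Fin M → Par q)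
  (H : Mat D N)

theorem Tdis_eq_splitScheme :
    Tdis f h L M θ w H =
      splitScheme (2 * L)⁻¹ (fun l => headMean f (θ l)) (fun l => headMean h (w l)) H := by
  funext l
  induction l with
  | zero => rfl
  | succ l ih => simp only [Tdis, splitScheme, halfStep, headMean, ih, mul_inv, mul_smul]

theorem Tbar_eq_mergedScheme :
    Tbar f h L M θ w H =
      mergedScheme (2 * L)⁻¹ (fun l => headMean f (θ l)) (fun l => headMean h (w l)) H := by
  funext l
  induction l with
  | zero => rfl
  | succ l ih =>
    simp only [Tbar, mergedScheme, halfStep, headMean, Pi.add_apply, ih, mul_inv, mul_smul,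
      Finset.sum_add_distrib, smul_add]

end Transformer

/-- the two-half-step discrete Transformer and the merged one-step scheme differ
by at most `C / L` in column norm at every grid point. -/
theorem stmt13 (D N q : ℕ) (f h : Mat D N → Par q → Mat D N)
    (B K r : ℝ) (φT : ℝ → ℝ)
    (hB : 0 < B) (hK : 0 < K) (hr : 0 < r)
    (hφT : Continuous φT ∧ Monotone φT)
    (hfdiffT : ∀ θ : Par q, Differentiable ℝ fun T : Mat D N => f T θ)
    (hhdiffT : ∀ w : Par q, Differentiable ℝ fun T : Mat D N => h T w)
    (hG1f : ∀ (T : Mat D N) (θ : Par q),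
      colNorm (f T θ) ≤ K * colNorm T * (1 + ‖θ‖ + ‖θ‖ ^ 2))
    (hG3f : ∀ (T : Mat D N) (θ : Par q),
      ‖fderiv ℝ (fun T' => f T' θ) T‖ ≤ φT ‖T‖ * (1 + ‖θ‖ + ‖θ‖ ^ 2))
    (hG1h : ∀ (T : Mat D N) (w : Par q),
      colNorm (h T w) ≤ K * colNorm T * (1 + ‖w‖ + ‖w‖ ^ 2))
    (hG3h : ∀ (T : Mat D N) (w : Par q),
      ‖fderiv ℝ (fun T' => h T' w) T‖ ≤ φT ‖T‖ * (1 + ‖w‖ + ‖w‖ ^ 2)) :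
    ∃ C : ℝ, 0 < C ∧ ∀ (L M : ℕ), 0 < L → 0 < M →
      ∀ θ w : ℕ → Fin M → Par q,
        (∀ l < L, ∀ j : Fin M, Real.sqrt (‖θ l j‖ ^ 2 + ‖w l j‖ ^ 2) ≤ r) →
        ∀ H : Mat D N, colNorm H ≤ B →
          ∀ l ≤ L,
            colNorm (Tdis f h L M θ w H l - Tbar f h L M θ w H l) ≤ C / L := by
  obtain ⟨-, hφ⟩ := hφT
  set k := √(N + 1) * K * (1 + r + r ^ 2)
  set ρ₀ := √(N + 1) * B
  set Λ := φT (exp k * ρ₀) * (1 + r + r ^ 2)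
  have hΛ : 0 ≤ Λ := mul_nonneg (nonneg_of_norm_fderiv_le hφ hG3f (by positivity)) (by positivity)
  refine ⟨exp Λ * Λ * k * (exp k * ρ₀) / 4 + 1, by positivity, ?_⟩
  intro L M hL hM θ w hΘ H hH l hl
  have hθ : ∀ l < L, ∀ j, ‖θ l j‖ ≤ r := fun l hl j =>
    (le_sqrt_of_sq_le (le_add_of_nonneg_right (sq_nonneg _))).trans (hΘ l hl j)
  have hw : ∀ l < L, ∀ j, ‖w l j‖ ≤ r := fun l hl j =>
    (le_sqrt_of_sq_le (le_add_of_nonneg_left (sq_nonneg _))).trans (hΘ l hl j)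
  rw [Tdis_eq_splitScheme, Tbar_eq_mergedScheme]
  calc _ ≤ ‖_‖ := colNorm_le_norm _
    _ ≤ exp Λ * Λ * k * (exp k * ρ₀) / (4 * L) :=
      norm_splitScheme_sub_mergedScheme_le hL (by positivity) hΛ
        ((norm_le_sqrt_mul_colNorm H).trans (mul_le_mul_of_nonneg_left hH (sqrt_nonneg _)))
        (fun l hl => norm_headMean_le_of_colNorm_le hK.le hG1f hM (hθ l hl))
        (fun l hl => norm_headMean_le_of_colNorm_le hK.le hG1h hM (hw l hl))
        (fun l hl _ hx _ hy => norm_headMean_sub_le hφ hfdiffT hG3f hM (hθ l hl) hx hy)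
        (fun l hl _ hx _ hy => norm_headMean_sub_le hφ hhdiffT hG3h hM (hw l hl) hx hy) l hl
    _ ≤ (exp Λ * Λ * k * (exp k * ρ₀) / 4 + 1) / L := by
      rw [← div_div]
      gcongr
      linarith
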